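/- For every integer m ≥ 1, if there exists a binary self-orthogonal [63m + 7, 6] code with minimum distance ≥ 32m + 2, then there exists an even-like binary [31m + 5, 5] code with minimum distance ≥ 16m + 2, which violates the Griesmer bound since Σ_{i=0}^{4} ⌈(16m+2)/2^i⌉ = 31m + 6 > 31m + 5; hence no binary self-orthogonal [63m + 7, 6, 32m + 2] code exists. -/

import Mathlib

/-!
Over `ZMod 2` the word `x * c` is the indicator of the common support of `x` and `c`, so
`wt (x + c) = wt x + wt c - 2 wt (x * c)`. Delete from a code `C` the support of a codeword `c`
of minimum weight. Restriction to the remaining coordinates lowers the dimension by exactly one,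
since a codeword vanishing there is `0` or `c`; and as `wt (x + c) ≥ wt c`, a codeword `x` restricts
to a word of weight `wt x - wt (x * c) ≥ wt x / 2`. Iterating gives the Griesmer bound
`n ≥ ∑ i < k, ⌈d / 2 ^ i⌉`. If `C` is self-orthogonal, `wt x` and `wt (x * c)` are even, so
the residual code is even-like and its minimum distance rounds up to `2 ⌈d / 4⌉`. For a
self-orthogonal `[63m+7, 6, ≥ 32m+2]` code this is an even-like `[≤ 31m+5, 5, ≥ 16m+2]` code,
while Griesmer demands length `31m+6`.
-/

/-- A binary linear code is self-orthogonal if all pairs of codewords have zero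
inner product over `F_2`. -/
def IsSO {n : ℕ} (C : Submodule (ZMod 2) (Fin n → ZMod 2)) : Prop :=
  ∀ x ∈ C, ∀ y ∈ C, ∑ i, x i * y i = 0

/-- `C` has minimum distance exactly `d`. -/
def IsMinDist {n : ℕ} (C : Submodule (ZMod 2) (Fin n → ZMod 2)) (d : ℕ) : Prop :=
  (∃ x ∈ C, x ≠ 0 ∧ hammingNorm x = d) ∧ ∀ x ∈ C, x ≠ 0 → d ≤ hammingNorm x

open Finset

lemma ZMod.eq_zero_or_eq_one (a : ZMod 2) : a = 0 ∨ a = 1 := by decide +revert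

section
variable {ι : Type*} [Fintype ι]

lemma hammingNorm_eq_sum_ite (x : ι → ZMod 2) :
    hammingNorm x = ∑ i, if x i ≠ 0 then 1 else 0 := card_filter _ _

lemma sum_eq_hammingNorm (x : ι → ZMod 2) : ∑ i, x i = (hammingNorm x : ZMod 2) := by
  rw [hammingNorm_eq_sum_ite]
  push_cast
  refine sum_congr rfl fun i _ => ?_
  rcases (x i).eq_zero_or_eq_one with h | h <;> simp [h]

lemma sum_eq_zero_iff_even_hammingNorm (x : ι → ZMod 2) :
    ∑ i, x i = 0 ↔ Even (hammingNorm x) := by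
  rw [sum_eq_hammingNorm, ZMod.natCast_eq_zero_iff_even]

lemma hammingNorm_add_add_two_mul_hammingNorm_mul (x y : ι → ZMod 2) :
    hammingNorm (x + y) + 2 * hammingNorm (x * y) = hammingNorm x + hammingNorm y := by
  simp only [hammingNorm_eq_sum_ite, mul_sum, ← sum_add_distrib]
  refine sum_congr rfl fun i _ => ?_
  rcases (x i).eq_zero_or_eq_one with h | h <;> rcases (y i).eq_zero_or_eq_one with h' | h' <;>
    (simp [h, h']; try decide)

lemma hammingNorm_restrict_add_hammingNorm_mul (x c : ι → ZMod 2) :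
    hammingNorm (fun i : {i // c i = 0} => x i) + hammingNorm (x * c) = hammingNorm x := by
  simp only [hammingNorm_eq_sum_ite]
  rw [← sum_subtype (univ.filter (c · = 0)) (by simp) (fun i => if x i ≠ 0 then 1 else 0),
    sum_filter, ← sum_add_distrib]
  refine sum_congr rfl fun i _ => ?_
  rcases (x i).eq_zero_or_eq_one with h | h <;> rcases (c i).eq_zero_or_eq_one with h' | h' <;>
    simp [h, h']

lemma card_subtype_eq_zero_add_hammingNorm (c : ι → ZMod 2) :
    Fintype.card {i // c i = 0} + hammingNorm c = Fintype.card ι := by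
  rw [Fintype.card_subtype, hammingNorm, ← card_univ]
  exact card_filter_add_card_filter_not _

lemma hammingNorm_mul_self (x : ι → ZMod 2) : hammingNorm (x * x) = hammingNorm x := by
  congr 1
  funext i
  rcases (x i).eq_zero_or_eq_one with h | h <;> simp [h]

variable (C : Submodule (ZMod 2) (ι → ZMod 2))

def IsMinWeightCodeword (c : ι → ZMod 2) : Prop :=
  c ∈ C ∧ c ≠ 0 ∧ ∀ x ∈ C, x ≠ 0 → hammingNorm c ≤ hammingNorm x

lemma exists_isMinWeightCodeword (hC : C ≠ ⊥) : ∃ c, IsMinWeightCodeword C c := by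
  classical
  obtain ⟨x, hx, hx0⟩ := Submodule.exists_mem_ne_zero_of_ne_bot hC
  have hw : ∃ w, ∃ x ∈ C, x ≠ 0 ∧ hammingNorm x = w := ⟨_, x, hx, hx0, rfl⟩
  obtain ⟨c, hc, hc0, hcw⟩ := Nat.find_spec hw
  exact ⟨c, hc, hc0, fun y hy hy0 => hcw ▸ Nat.find_min' hw ⟨y, hy, hy0, rfl⟩⟩

def residualCode (c : ι → ZMod 2) : Submodule (ZMod 2) ({i // c i = 0} → ZMod 2) :=
  C.map (LinearMap.funLeft (ZMod 2) (ZMod 2) Subtype.val)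

variable {C} {c : ι → ZMod 2}

lemma two_mul_hammingNorm_mul_le (hc : IsMinWeightCodeword C c) {x : ι → ZMod 2} (hx : x ∈ C)
    (hxc : x ≠ c) : 2 * hammingNorm (x * c) ≤ hammingNorm x := by
  have hsum : x + c ≠ 0 := fun h => hxc (funext fun i => CharTwo.add_eq_zero.1 (congrFun h i))
  have := hc.2.2 _ (C.add_mem hx hc.1) hsum
  have := hammingNorm_add_add_two_mul_hammingNorm_mul x c
  omega

lemma eq_of_restrict_eq_zero (hc : IsMinWeightCodeword C c) {x : ι → ZMod 2} (hx : x ∈ C)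
    (hx0 : x ≠ 0) (hres : (fun i : {i // c i = 0} => x i) = 0) : x = c := by
  by_contra hxc
  have h1 := two_mul_hammingNorm_mul_le hc hx hxc
  have h2 := hammingNorm_restrict_add_hammingNorm_mul x c
  rw [hres, hammingNorm_zero] at h2
  have := hammingNorm_pos_iff.2 hx0
  omega

lemma finrank_residualCode_add_one (hc : IsMinWeightCodeword C c) :
    Module.finrank (ZMod 2) (residualCode C c) + 1 = Module.finrank (ZMod 2) C := by
  let f := (LinearMap.funLeft (ZMod 2) (ZMod 2) (Subtype.val : {i // c i = 0} → ι)).comp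
    C.subtype
  have hker : LinearMap.ker f = Submodule.span (ZMod 2) {⟨c, hc.1⟩} := by
    apply le_antisymm
    · intro x hx
      by_cases hx0 : (x : ι → ZMod 2) = 0
      · rw [show x = 0 from Subtype.ext hx0]
        exact zero_mem _
      · rw [show x = ⟨c, hc.1⟩ from Subtype.ext (eq_of_restrict_eq_zero hc x.2 hx0 hx)]
        exact Submodule.mem_span_singleton_self _
    · rw [Submodule.span_le, Set.singleton_subset_iff]
      exact funext fun i => i.2
  have hc0 : (⟨c, hc.1⟩ : C) ≠ 0 := fun h => hc.2.1 (congrArg Subtype.val h)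
  have := LinearMap.finrank_range_add_finrank_ker f
  rwa [hker, finrank_span_singleton hc0, LinearMap.range_comp, Submodule.range_subtype] at this

lemma exists_preimage_of_mem_residualCode (hc : IsMinWeightCodeword C c)
    {y : {i // c i = 0} → ZMod 2} (hy : y ∈ residualCode C c) (hy0 : y ≠ 0) :
    ∃ x ∈ C, x ≠ 0 ∧ hammingNorm y + hammingNorm (x * c) = hammingNorm x ∧
      2 * hammingNorm (x * c) ≤ hammingNorm x := by
  obtain ⟨x, hx, rfl⟩ := hy
  have hxc : x ≠ c := by
    rintro rfl
    exact hy0 (funext fun i => i.2)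
  refine ⟨x, hx, ?_, hammingNorm_restrict_add_hammingNorm_mul x c,
    two_mul_hammingNorm_mul_le hc hx hxc⟩
  rintro rfl
  exact hy0 rfl

lemma le_two_mul_hammingNorm_of_mem_residualCode (hc : IsMinWeightCodeword C c) {d : ℕ}
    (hd : ∀ x ∈ C, x ≠ 0 → d ≤ hammingNorm x) {y : {i // c i = 0} → ZMod 2}
    (hy : y ∈ residualCode C c) (hy0 : y ≠ 0) : d ≤ 2 * hammingNorm y := by
  obtain ⟨x, hx, hx0, hsplit, hle⟩ := exists_preimage_of_mem_residualCode hc hy hy0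
  have := hd x hx hx0
  omega

lemma even_hammingNorm_mul_of_selfOrthogonal
    (hSO : ∀ x ∈ C, ∀ y ∈ C, ∑ i, x i * y i = 0) {x y : ι → ZMod 2} (hx : x ∈ C) (hy : y ∈ C) :
    Even (hammingNorm (x * y)) :=
  (sum_eq_zero_iff_even_hammingNorm (x * y)).1 (hSO x hx y hy)

lemma even_hammingNorm_of_mem_residualCode (hSO : ∀ x ∈ C, ∀ y ∈ C, ∑ i, x i * y i = 0)
    (hc : IsMinWeightCodeword C c) {y : {i // c i = 0} → ZMod 2} (hy : y ∈ residualCode C c) :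
    Even (hammingNorm y) := by
  obtain ⟨x, hx, rfl⟩ := hy
  have hxx := even_hammingNorm_mul_of_selfOrthogonal hSO hx hx
  have hxc := even_hammingNorm_mul_of_selfOrthogonal hSO hx hc.1
  have hsplit := hammingNorm_restrict_add_hammingNorm_mul x c
  rw [hammingNorm_mul_self, ← hsplit, Nat.even_add] at hxx
  exact hxx.2 hxc
end

/-- `⌈⌈d / 2⌉ / 2 ^ i⌉ = ⌈d / 2 ^ (i + 1)⌉`, writing `⌈a / b⌉` as `(a + b - 1) / b`. -/
lemma ceil_div_two_pow_ceil_half (d i : ℕ) :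
    ((d + 1) / 2 + 2 ^ i - 1) / 2 ^ i = (d + 2 ^ (i + 1) - 1) / 2 ^ (i + 1) := by
  have h1 : 1 ≤ 2 ^ i := Nat.one_le_two_pow
  have h2 : d + 2 ^ (i + 1) - 1 = (d + 1) + (2 ^ i - 1) * 2 := by
    rw [pow_succ]; omega
  rw [h2, pow_succ, mul_comm (2 ^ i) 2, ← Nat.div_div_eq_div_mul,
    Nat.add_mul_div_right _ _ (by norm_num : 0 < 2)]
  congr 1
  omega

theorem griesmer_bound {ι : Type*} [Fintype ι] (C : Submodule (ZMod 2) (ι → ZMod 2)) {k d : ℕ}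
    (hk : Module.finrank (ZMod 2) C = k) (hd : ∀ x ∈ C, x ≠ 0 → d ≤ hammingNorm x) :
    ∑ i ∈ range k, (d + 2 ^ i - 1) / 2 ^ i ≤ Fintype.card ι := by
  induction k generalizing ι C d with
  | zero => simp
  | succ k ih =>
    obtain ⟨c, hc⟩ := exists_isMinWeightCodeword C (by rintro rfl; simp at hk)
    have hres := ih (residualCode C c) (d := (d + 1) / 2)
      (by have := finrank_residualCode_add_one hc; omega)
      (fun y hy hy0 => by have := le_two_mul_hammingNorm_of_mem_residualCode hc hd hy hy0; omega)
    have hcard := card_subtype_eq_zero_add_hammingNorm c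
    have hdc := hd c hc.1 hc.2.1
    simp only [ceil_div_two_pow_ceil_half] at hres
    rw [sum_range_succ', pow_zero, Nat.add_sub_cancel, Nat.div_one]
    omega

lemma hammingNorm_extend_zero {σ τ β : Type*} [Fintype σ] [Fintype τ] [Zero β] [DecidableEq β]
    {e : σ → τ} (he : e.Injective) (y : σ → β) :
    hammingNorm (Function.extend e y 0) = hammingNorm y := by
  rw [hammingNorm, hammingNorm, ← card_map ⟨e, he⟩]
  congr 1
  ext j
  by_cases hj : ∃ i, e i = j
  · obtain ⟨i, rfl⟩ := hj
    simp [he.extend_apply]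
  · simpa [Function.extend_apply' _ _ _ hj] using fun i _ hi => hj ⟨i, hi⟩

lemma exists_fin_code_of_card_le {σ K : Type*} [Fintype σ] [Ring K] [DecidableEq K]
    (D : Submodule K (σ → K)) {N : ℕ} (hN : Fintype.card σ ≤ N) :
    ∃ D' : Submodule K (Fin N → K), Module.finrank K D' = Module.finrank K D ∧
      ∀ x ∈ D', ∃ y ∈ D, hammingNorm x = hammingNorm y := by
  obtain ⟨e⟩ := Function.Embedding.nonempty_of_card_le (hN.trans (Fintype.card_fin N).ge)
  let f := Function.ExtendByZero.linearMap K e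
  have hf : Function.Injective f := Function.extend_injective e.injective 0
  refine ⟨D.map f, (D.equivMapOfInjective f hf).finrank_eq.symm, ?_⟩
  rintro _ ⟨y, hy, rfl⟩
  exact ⟨y, hy, hammingNorm_extend_zero e.injective y⟩

theorem exists_evenLike_code_of_isSO {n N k d : ℕ} {C : Submodule (ZMod 2) (Fin n → ZMod 2)}
    (hSO : IsSO C) (hk : Module.finrank (ZMod 2) C = k + 1)
    (hd : ∀ x ∈ C, x ≠ 0 → d ≤ hammingNorm x) (hN : n ≤ N + d) :
    ∃ D : Submodule (ZMod 2) (Fin N → ZMod 2), Module.finrank (ZMod 2) D = k ∧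
      (∀ x ∈ D, ∑ i, x i = 0) ∧ ∀ x ∈ D, x ≠ 0 → 2 * ((d + 3) / 4) ≤ hammingNorm x := by
  obtain ⟨c, hc⟩ := exists_isMinWeightCodeword C (by rintro rfl; simp at hk)
  have hcard := card_subtype_eq_zero_add_hammingNorm c
  have hdc := hd c hc.1 hc.2.1
  obtain ⟨D, hDk, hD⟩ := exists_fin_code_of_card_le (residualCode C c) (N := N)
    (by rw [Fintype.card_fin] at hcard; omega)
  have hDeven : ∀ x ∈ D, Even (hammingNorm x) := fun x hx => by
    obtain ⟨y, hy, hxy⟩ := hD x hx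
    exact hxy ▸ even_hammingNorm_of_mem_residualCode hSO hc hy
  refine ⟨D, by have := finrank_residualCode_add_one hc; omega,
    fun x hx => (sum_eq_zero_iff_even_hammingNorm x).2 (hDeven x hx), fun x hx hx0 => ?_⟩
  obtain ⟨y, hy, hxy⟩ := hD x hx
  have hy0 : y ≠ 0 := by rwa [← hammingNorm_ne_zero_iff, ← hxy, hammingNorm_ne_zero_iff]
  have hdy := le_two_mul_hammingNorm_of_mem_residualCode hc hd hy hy0
  obtain ⟨r, hr⟩ := hDeven x hx
  omega

theorem no_so_63m7_general (m : ℕ) :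
    ((∃ C : Submodule (ZMod 2) (Fin (63 * m + 7) → ZMod 2),
        IsSO C ∧ Module.finrank (ZMod 2) C = 6 ∧
          ∀ x ∈ C, x ≠ 0 → 32 * m + 2 ≤ hammingNorm x) →
      ∃ C : Submodule (ZMod 2) (Fin (31 * m + 5) → ZMod 2),
        Module.finrank (ZMod 2) C = 5 ∧ (∀ x ∈ C, ∑ i, x i = 0) ∧
          ∀ x ∈ C, x ≠ 0 → 16 * m + 2 ≤ hammingNorm x) ∧
    (∑ i ∈ Finset.range 5, (16 * m + 2 + 2 ^ i - 1) / 2 ^ i = 31 * m + 6) ∧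
    ¬ ∃ C : Submodule (ZMod 2) (Fin (63 * m + 7) → ZMod 2),
        IsSO C ∧ Module.finrank (ZMod 2) C = 6 ∧
          ∀ x ∈ C, x ≠ 0 → 32 * m + 2 ≤ hammingNorm x := by
  have hsum : ∑ i ∈ range 5, (16 * m + 2 + 2 ^ i - 1) / 2 ^ i = 31 * m + 6 := by
    simp only [sum_range_succ, sum_range_zero]
    omega
  have hshorten : ∀ {C : Submodule (ZMod 2) (Fin (63 * m + 7) → ZMod 2)}, IsSO C →
      Module.finrank (ZMod 2) C = 6 → (∀ x ∈ C, x ≠ 0 → 32 * m + 2 ≤ hammingNorm x) →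
      ∃ D : Submodule (ZMod 2) (Fin (31 * m + 5) → ZMod 2), Module.finrank (ZMod 2) D = 5 ∧
        (∀ x ∈ D, ∑ i, x i = 0) ∧ ∀ x ∈ D, x ≠ 0 → 16 * m + 2 ≤ hammingNorm x :=
    fun hSO hk hd => by
      have hceil : 2 * ((32 * m + 2 + 3) / 4) = 16 * m + 2 := by omega
      simpa only [hceil] using exists_evenLike_code_of_isSO (N := 31 * m + 5) hSO hk hd (by omega)
  refine ⟨fun ⟨C, hSO, hk, hd⟩ => hshorten hSO hk hd, hsum, fun ⟨C, hSO, hk, hd⟩ => ?_⟩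
  obtain ⟨D, hDk, -, hDd⟩ := hshorten hSO hk hd
  have hgriesmer := griesmer_bound D hDk hDd
  rw [hsum, Fintype.card_fin] at hgriesmer
  omega

/-- For every `m ≥ 1`: a binary self-orthogonal `[63m+7, 6]` code with minimum distance
`≥ 32m+2` would yield an even-like binary `[31m+5, 5]` code with minimum distance
`≥ 16m+2`, violating the Griesmer bound (`Σ_{i=0}^{4} ⌈(16m+2)/2^i⌉ = 31m+6 > 31m+5`);
hence no such self-orthogonal code exists. -/
theorem no_so_63m7 (m : ℕ) (hm : 1 ≤ m) :
    ((∃ C : Submodule (ZMod 2) (Fin (63 * m + 7) → ZMod 2),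
        IsSO C ∧ Module.finrank (ZMod 2) C = 6 ∧
          ∀ x ∈ C, x ≠ 0 → 32 * m + 2 ≤ hammingNorm x) →
      ∃ C : Submodule (ZMod 2) (Fin (31 * m + 5) → ZMod 2),
        Module.finrank (ZMod 2) C = 5 ∧ (∀ x ∈ C, ∑ i, x i = 0) ∧
          ∀ x ∈ C, x ≠ 0 → 16 * m + 2 ≤ hammingNorm x) ∧
    (∑ i ∈ Finset.range 5, (16 * m + 2 + 2 ^ i - 1) / 2 ^ i = 31 * m + 6) ∧
    ¬ ∃ C : Submodule (ZMod 2) (Fin (63 * m + 7) → ZMod 2),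
        IsSO C ∧ Module.finrank (ZMod 2) C = 6 ∧
          ∀ x ∈ C, x ≠ 0 → 32 * m + 2 ≤ hammingNorm x :=
  no_so_63m7_general m
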